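/- arXiv:2504.12683 — 2 statements merged into one kernel-verified Lean document; each statement's English description precedes it below -/
import Mathlib

section
/- The variance-gamma density arises as a Gamma mixture of normals: for Σ positive definite, ψ > 0, μ, α ∈ ℝ^d with α ≠ 0 and v ≠ μ, ∫₀^∞ φ(v; μ + wα, wΣ) · (ψ^ψ/Γ(ψ)) w^{ψ-1} e^{-ψw} dw = [2 ψ^ψ exp((v−μ)ᵀΣ^{-1}α) / ((2π)^{d/2}|Σ|^{1/2}Γ(ψ))] · (δ/(ρ+2ψ))^{(ψ−d/2)/2} · K_{ψ−d/2}(√((ρ+2ψ)δ)), where δ = (v−μ)ᵀΣ^{-1}(v−μ) and ρ = αᵀΣ^{-1}α. -/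
open MeasureTheory Real Matrix

/-- The modified Bessel function of the third kind, defined by its integral representation. -/
noncomputable def besselK (l u : ℝ) : ℝ :=
  (1/2) * ∫ w in Set.Ioi (0:ℝ), w ^ (l - 1) * Real.exp (-(u/2) * (w + 1/w))

/-- Density of the `d`-variate normal distribution `N(m, C)`. -/
noncomputable def mvnPdf (d : ℕ) (m : Fin d → ℝ) (C : Matrix (Fin d) (Fin d) ℝ)
    (x : Fin d → ℝ) : ℝ :=
  (2 * Real.pi) ^ (-(d:ℝ)/2) * C.det ^ (-(1:ℝ)/2) *
    Real.exp (-(1/2) * ((x - m) ⬝ᵥ (C⁻¹ *ᵥ (x - m))))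

/-! Under `N(μ + wα, wΣ)` the exponent at `v` is `β - (δ / w + ρ w) / 2` with
`β = (v - μ)ᵀΣ⁻¹α`, and `det (wΣ) ^ (-1/2)` contributes `w ^ (-d/2)`. Multiplying by the Gamma
density leaves `e^β w^(λ-1) e^(-(a w + δ / w) / 2)` with `λ = ψ - d/2` and `a = ρ + 2ψ`.
The substitution `w = √(δ / a) t` turns `a w + δ / w` into `√(a δ) (t + 1/t)`, the exponent in the
integral defining `K_λ`. -/

lemma integral_rpow_mul_exp_neg_mul_add_div_Ioi {a b : ℝ} (ha : 0 < a) (hb : 0 < b) (l : ℝ) :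
    ∫ w in Set.Ioi (0:ℝ), w ^ (l - 1) * exp (-(a * w + b / w) / 2) =
      2 * (b / a) ^ (l / 2) * besselK l (√(a * b)) := by
  set c := √(b / a) with hc_def
  have hc : 0 < c := sqrt_pos.mpr (div_pos hb ha)
  have hc_sq : c ^ 2 = b / a := sq_sqrt (div_pos hb ha).le
  have hac : a * c = √(a * b) := by
    have hsq : (a * c) ^ 2 = a * b := by rw [mul_pow, hc_sq]; field_simp
    rw [← hsq, sqrt_sq (by positivity)]
  set g : ℝ → ℝ := fun t => t ^ (l - 1) * exp (-(√(a * b) / 2) * (t + 1 / t))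
  have hsubst : ∀ w ∈ Set.Ioi (0:ℝ),
      w ^ (l - 1) * exp (-(a * w + b / w) / 2) = c ^ (l - 1) * g (c⁻¹ * w) := by
    rintro w (hw : 0 < w)
    simp only [g]
    rw [mul_rpow (inv_pos.mpr hc).le hw.le, mul_assoc, inv_rpow hc.le,
      mul_inv_cancel_left₀ (rpow_pos_of_pos hc _).ne', ← hac]
    congr 2
    have hb' : b = a * c ^ 2 := by rw [hc_sq]; field_simp
    rw [hb']
    field_simp
  have hcl : c ^ (l - 1) * c = (b / a) ^ (l / 2) := by
    rw [← rpow_add_one hc.ne', hc_def, sqrt_eq_rpow, ← rpow_mul (div_pos hb ha).le]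
    ring_nf
  rw [setIntegral_congr_fun measurableSet_Ioi hsubst, integral_const_mul,
    integral_comp_mul_left_Ioi g 0 (inv_pos.mpr hc), inv_inv, mul_zero, smul_eq_mul, besselK,
    ← hcl]
  ring

lemma dotProduct_mulVec_sub_smul {R n : Type*} [CommRing R] [Fintype n] {T : Matrix n n R}
    (hT : T.IsSymm) (y x : n → R) (w : R) :
    (y - w • x) ⬝ᵥ (T *ᵥ (y - w • x)) =
      y ⬝ᵥ (T *ᵥ y) - 2 * w * (y ⬝ᵥ (T *ᵥ x)) + w ^ 2 * (x ⬝ᵥ (T *ᵥ x)) := by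
  have hswap : x ⬝ᵥ (T *ᵥ y) = y ⬝ᵥ (T *ᵥ x) := by
    rw [dotProduct_mulVec, ← mulVec_transpose, hT.eq, dotProduct_comm]
  simp only [sub_dotProduct, dotProduct_sub, mulVec_sub, mulVec_smul, smul_dotProduct,
    dotProduct_smul, smul_eq_mul, hswap]
  ring

lemma mvnPdf_add_smul_smul {d : ℕ} (μ α v : Fin d → ℝ) {S : Matrix (Fin d) (Fin d) ℝ}
    (hS : S.PosDef) {w : ℝ} (hw : 0 < w) :
    mvnPdf d (μ + w • α) (w • S) v =
      (2 * π) ^ (-(d:ℝ)/2) * S.det ^ (-(1:ℝ)/2) * w ^ (-(d:ℝ)/2) *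
        exp ((v - μ) ⬝ᵥ (S⁻¹ *ᵥ α)) *
        exp (-(w * (α ⬝ᵥ (S⁻¹ *ᵥ α)) + (v - μ) ⬝ᵥ (S⁻¹ *ᵥ (v - μ)) / w) / 2) := by
  have hdet : 0 < S.det := hS.det_pos
  have hSinv_symm : S⁻¹.IsSymm := by
    simpa [IsSymm, conjTranspose_eq_transpose_of_trivial] using hS.inv.isHermitian.eq
  have hinv : (w • S)⁻¹ = w⁻¹ • S⁻¹ := by
    have := invertibleOfNonzero hw.ne'
    rw [inv_smul S w (isUnit_iff_ne_zero.mpr hdet.ne'), invOf_eq_inv]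
  have hdet_smul : (w • S).det ^ (-(1:ℝ)/2) = w ^ (-(d:ℝ)/2) * S.det ^ (-(1:ℝ)/2) := by
    rw [det_smul, Fintype.card_fin, mul_rpow (by positivity) hdet.le, ← rpow_natCast,
      ← rpow_mul hw.le]
    ring_nf
  rw [mvnPdf, hdet_smul, sub_add_eq_sub_sub, hinv, smul_mulVec, dotProduct_smul, smul_eq_mul,
    dotProduct_mulVec_sub_smul hSinv_symm, mul_assoc _ (exp _) (exp _), ← exp_add]
  set β := (v - μ) ⬝ᵥ (S⁻¹ *ᵥ α)
  set ρ := α ⬝ᵥ (S⁻¹ *ᵥ α)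
  set δ := (v - μ) ⬝ᵥ (S⁻¹ *ᵥ (v - μ))
  have hexponent : -(1 / 2) * (w⁻¹ * (δ - 2 * w * β + w ^ 2 * ρ)) = β + -(w * ρ + δ / w) / 2 := by
    field_simp
    ring
  rw [hexponent]
  ring

theorem vg_density_mixture_general {d : ℕ} (μ α v : Fin d → ℝ) (S : Matrix (Fin d) (Fin d) ℝ)
    (hS : S.PosDef) (ψ : ℝ) (hψ : 0 < ψ) (hv : v ≠ μ)
    (ρ δ : ℝ) (hρ : ρ = α ⬝ᵥ (S⁻¹ *ᵥ α)) (hδ : δ = (v - μ) ⬝ᵥ (S⁻¹ *ᵥ (v - μ))) :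
    ∫ w in Set.Ioi (0:ℝ),
        mvnPdf d (μ + w • α) (w • S) v *
          (ψ ^ ψ / Real.Gamma ψ) * w ^ (ψ - 1) * Real.exp (-ψ * w) =
      2 * ψ ^ ψ * Real.exp ((v - μ) ⬝ᵥ (S⁻¹ *ᵥ α)) /
          ((2 * Real.pi) ^ ((d:ℝ)/2) * Real.sqrt S.det * Real.Gamma ψ) *
        (δ / (ρ + 2*ψ)) ^ ((ψ - (d:ℝ)/2) / 2) *
        besselK (ψ - (d:ℝ)/2) (Real.sqrt ((ρ + 2*ψ) * δ)) := by
  have hρ_nonneg : 0 ≤ ρ := by simpa [hρ] using hS.inv.posSemidef.dotProduct_mulVec_nonneg α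
  have hδ_pos : 0 < δ := by simpa [hδ] using hS.inv.dotProduct_mulVec_pos (sub_ne_zero.mpr hv)
  have ha : 0 < ρ + 2 * ψ := by positivity
  set C := (2 * π) ^ (-(d:ℝ)/2) * S.det ^ (-(1:ℝ)/2) * exp ((v - μ) ⬝ᵥ (S⁻¹ *ᵥ α)) *
    (ψ ^ ψ / Gamma ψ) with hC
  have hintegrand : ∀ w ∈ Set.Ioi (0:ℝ),
      mvnPdf d (μ + w • α) (w • S) v * (ψ ^ ψ / Gamma ψ) * w ^ (ψ - 1) * exp (-ψ * w) =
        C * (w ^ (ψ - d / 2 - 1) * exp (-((ρ + 2 * ψ) * w + δ / w) / 2)) := by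
    rintro w (hw : 0 < w)
    have hpow : w ^ (-(d:ℝ)/2) * w ^ (ψ - 1) = w ^ (ψ - d / 2 - 1) := by
      rw [← rpow_add hw]; ring_nf
    have hexp : exp (-(w * ρ + δ / w) / 2) * exp (-ψ * w) =
        exp (-((ρ + 2 * ψ) * w + δ / w) / 2) := by
      rw [← exp_add]; ring_nf
    rw [mvnPdf_add_smul_smul μ α v hS hw, ← hρ, ← hδ, ← hpow, ← hexp]
    ring
  rw [setIntegral_congr_fun measurableSet_Ioi hintegrand, integral_const_mul,
    integral_rpow_mul_exp_neg_mul_add_div_Ioi ha hδ_pos, hC, neg_div, rpow_neg (by positivity), neg_div,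
    rpow_neg hS.det_pos.le, ← sqrt_eq_rpow]
  have hΓ : Gamma ψ ≠ 0 := (Gamma_pos_of_pos hψ).ne'
  field_simp

/-- The variance-gamma density arises as a Gamma mixture of normals. -/
theorem vg_density_mixture {d : ℕ} (μ α v : Fin d → ℝ) (S : Matrix (Fin d) (Fin d) ℝ)
    (hS : S.PosDef) (ψ : ℝ) (hψ : 0 < ψ) (hα : α ≠ 0) (hv : v ≠ μ)
    (ρ δ : ℝ) (hρ : ρ = α ⬝ᵥ (S⁻¹ *ᵥ α)) (hδ : δ = (v - μ) ⬝ᵥ (S⁻¹ *ᵥ (v - μ))) :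
    ∫ w in Set.Ioi (0:ℝ),
        mvnPdf d (μ + w • α) (w • S) v *
          (ψ ^ ψ / Real.Gamma ψ) * w ^ (ψ - 1) * Real.exp (-ψ * w) =
      2 * ψ ^ ψ * Real.exp ((v - μ) ⬝ᵥ (S⁻¹ *ᵥ α)) /
          ((2 * Real.pi) ^ ((d:ℝ)/2) * Real.sqrt S.det * Real.Gamma ψ) *
        (δ / (ρ + 2*ψ)) ^ ((ψ - (d:ℝ)/2) / 2) *
        besselK (ψ - (d:ℝ)/2) (Real.sqrt ((ρ + 2*ψ) * δ)) :=
  vg_density_mixture_general μ α v S hS ψ hψ hv ρ δ hρ hδ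
end

section
/- Closed-form joint maximizer for location and skewness: fix positive weights t_i, w_i, u_i (i = 1,…,n) with u_i interpreted as weights for 1/W, set n₀ = Σ t_i, A = Σ t_i u_i, B = Σ t_i w_i and assume A·B − n₀² ≠ 0. Then for any positive definite Σ, the function (μ,α) ↦ −(1/2)Σ_i t_i [u_i (c_i − μ)ᵀΣ^{-1}(c_i − μ) + w_i αᵀΣ^{-1}α − (c_i − μ)ᵀΣ^{-1}α − αᵀΣ^{-1}(c_i − μ)] has a unique stationary point given by μ = [Σ_i t_i c_i (u_i·(B/n₀) − 1)] / ((B/n₀)·A − n₀) and α = [Σ_i t_i c_i ((A/n₀) − u_i)] / ((B/n₀)·A − n₀). -/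
open Matrix

/-! With `⟪x, y⟫ = xᵀ Σ⁻¹ y`, the objective is, up to a constant, `ℓ(p) - ½ Q(p, p)`, where
`ℓ(μ, α) = ⟪∑ tᵢuᵢcᵢ, μ⟫ + ⟪∑ tᵢcᵢ, α⟫` and `Q` is the symmetric bilinear form on pairs
`p = (μ, α)` with block matrix `[[A, n₀], [n₀, B]] ⊗ Σ⁻¹`. Its derivative at `p` is `ℓ - Q(p, ·)`,
so `p` is stationary iff `Q(p, ·) = ℓ`. As `Σ⁻¹` is nondegenerate and `A B - n₀² ≠ 0`, so is `Q`,
and the closed forms solve `Q(p, ·) = ℓ` by Cramer's rule. -/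

section LinearSystem

variable {K V : Type*} [Field K] [AddCommGroup V] [Module K V] {a b e : K}

theorem eq_zero_of_smul_add_smul_eq_zero (hdet : a * e - b ^ 2 ≠ 0) {x y : V}
    (h₁ : a • x + b • y = 0) (h₂ : b • x + e • y = 0) : x = 0 ∧ y = 0 := by
  have hx : (a * e - b ^ 2) • x = 0 := by linear_combination (norm := module) e • h₁ - b • h₂
  have hy : (a * e - b ^ 2) • y = 0 := by linear_combination (norm := module) a • h₂ - b • h₁
  exact ⟨(smul_eq_zero.1 hx).resolve_left hdet, (smul_eq_zero.1 hy).resolve_left hdet⟩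

theorem smul_add_smul_eq_of_eq_cramer (hb : b ≠ 0) (hdet : a * e - b ^ 2 ≠ 0) {x y μ α : V}
    (hμ : μ = (e / b * a - b)⁻¹ • ((e / b) • x - y))
    (hα : α = (e / b * a - b)⁻¹ • ((a / b) • y - x)) :
    a • μ + b • α = x ∧ b • μ + e • α = y := by
  have hk : e / b * a - b = (a * e - b ^ 2) / b := by field_simp
  subst hμ hα
  rw [hk, inv_div]
  constructor <;> match_scalars <;> field_simp <;> ring

end LinearSystem

section QuadraticObjective

variable {E : Type*} [NormedAddCommGroup E] [NormedSpace ℝ E]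

theorem hasFDerivAt_zero_iff_of_quadratic {Q : E →L[ℝ] E →L[ℝ] ℝ}
    (hQ : ∀ x y, Q x y = Q y x) (hQsep : ∀ x, (∀ y, Q x y = 0) → x = 0)
    {f : E → ℝ} {c : ℝ} {p₀ : E} (hf : ∀ p, f p = c + Q p₀ p - Q p p / 2) (p : E) :
    HasFDerivAt f (0 : E →L[ℝ] ℝ) p ↔ p = p₀ := by
  have hD : HasFDerivAt f (Q (p₀ - p)) p := by
    have hsq := Q.hasFDerivAt_of_bilinear (hasFDerivAt_id (𝕜 := ℝ) p) (hasFDerivAt_id p)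
    have h := ((hasFDerivAt_const c p).add (Q p₀).hasFDerivAt).sub (hsq.const_mul 2⁻¹)
    refine (h.congr_of_eventuallyEq (.of_forall fun y => ?_)).congr_fderiv ?_
    · simp only [hf, id_eq, Pi.sub_apply, Pi.add_apply]
      ring
    · ext q
      simp only [ContinuousLinearMap.precompR_apply, ContinuousLinearMap.precompL_apply,
        ContinuousLinearMap.compL_apply, ContinuousLinearMap.comp_id, ContinuousLinearMap.id_apply,
        id_eq, _root_.add_apply, _root_.sub_apply, _root_.smul_apply, smul_eq_mul, zero_add, map_sub,
        hQ q p]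
      ring
  refine ⟨fun h => ?_, fun h => by simpa [h] using hD⟩
  have hzero : Q (p₀ - p) = 0 := (h.unique hD).symm
  exact (sub_eq_zero.1 (hQsep _ fun y => by simp [hzero])).symm

noncomputable def blockForm (a b e : ℝ) (β : E →L[ℝ] E →L[ℝ] ℝ) : E × E →L[ℝ] E × E →L[ℝ] ℝ :=
  a • β.bilinearComp (.fst ℝ E E) (.fst ℝ E E) +
    b • (β.bilinearComp (.fst ℝ E E) (.snd ℝ E E) + β.bilinearComp (.snd ℝ E E) (.fst ℝ E E)) +
    e • β.bilinearComp (.snd ℝ E E) (.snd ℝ E E)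

theorem blockForm_apply (a b e : ℝ) (β : E →L[ℝ] E →L[ℝ] ℝ) (x y : E × E) :
    blockForm a b e β x y = β (a • x.1 + b • x.2) y.1 + β (b • x.1 + e • x.2) y.2 := by
  simp only [blockForm, ContinuousLinearMap.bilinearComp_apply, ContinuousLinearMap.coe_fst',
    ContinuousLinearMap.coe_snd', map_add, map_smul, _root_.add_apply, _root_.smul_apply, smul_eq_mul]
  ring

variable {a b e : ℝ} {β : E →L[ℝ] E →L[ℝ] ℝ}

theorem blockForm_comm (hβ : ∀ x y, β x y = β y x) (x y : E × E) :
    blockForm a b e β x y = blockForm a b e β y x := by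
  simp only [blockForm_apply, map_add, map_smul, _root_.add_apply, _root_.smul_apply, smul_eq_mul,
    hβ x.1, hβ x.2]
  ring

theorem blockForm_separating (hβ : ∀ x, (∀ y, β x y = 0) → x = 0) (hdet : a * e - b ^ 2 ≠ 0)
    (x : E × E) (hx : ∀ y, blockForm a b e β x y = 0) : x = 0 := by
  have h₁ : a • x.1 + b • x.2 = 0 := hβ _ fun z => by simpa [blockForm_apply] using hx (z, 0)
  have h₂ : b • x.1 + e • x.2 = 0 := hβ _ fun z => by simpa [blockForm_apply] using hx (0, z)
  obtain ⟨h₁, h₂⟩ := eq_zero_of_smul_add_smul_eq_zero hdet h₁ h₂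
  exact Prod.ext h₁ h₂

noncomputable def locationSkewnessObjective {ι : Type*} [Fintype ι] (β : E →L[ℝ] E →L[ℝ] ℝ)
    (t u w : ι → ℝ) (c : ι → E) (p : E × E) : ℝ :=
  -(1/2) * ∑ i, t i * (u i * β (c i - p.1) (c i - p.1) + w i * β p.2 p.2 -
    β (c i - p.1) p.2 - β p.2 (c i - p.1))

theorem locationSkewnessObjective_eq {ι : Type*} [Fintype ι] (hβ : ∀ x y, β x y = β y x)
    (t u w : ι → ℝ) (c : ι → E) (p : E × E) :
    locationSkewnessObjective β t u w c p =
      -(∑ i, t i * u i * β (c i) (c i)) / 2 +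
        (β (∑ i, (t i * u i) • c i) p.1 + β (∑ i, t i • c i) p.2) -
        blockForm (∑ i, t i * u i) (∑ i, t i) (∑ i, t i * w i) β p p / 2 := by
  have hterm : ∀ i, -(1/2) * (t i * (u i * β (c i - p.1) (c i - p.1) + w i * β p.2 p.2 -
      β (c i - p.1) p.2 - β p.2 (c i - p.1))) =
      -(t i * u i * β (c i) (c i)) / 2 + (t i * u i * β (c i) p.1 + t i * β (c i) p.2) -
        (t i * u i * β p.1 p.1 + t i * β p.2 p.1 + (t i * β p.1 p.2 + t i * w i * β p.2 p.2)) / 2 := by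
    intro i
    simp only [map_sub, _root_.sub_apply, hβ p.2, hβ p.1 (c i)]
    ring
  rw [locationSkewnessObjective, Finset.mul_sum, Finset.sum_congr rfl fun i _ => hterm i]
  simp only [blockForm_apply, map_add, map_smul, map_sum, _root_.sum_apply, _root_.add_apply,
    _root_.smul_apply, smul_eq_mul, Finset.sum_mul, Finset.sum_add_distrib, Finset.sum_sub_distrib,
    ← Finset.sum_div, Finset.sum_neg_distrib]

end QuadraticObjective

theorem Matrix.IsSymm.toLinearMap₂'_comm {ι R : Type*} [Fintype ι] [DecidableEq ι] [CommSemiring R]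
    {M : Matrix ι ι R} (hM : M.IsSymm) (x y : ι → R) :
    toLinearMap₂' R M x y = toLinearMap₂' R M y x := by
  rw [toLinearMap₂'_apply', toLinearMap₂'_apply', ← dotProduct_transpose_mulVec, hM.eq]

theorem location_skewness_stationary_point_general {d n : ℕ}
    (t u w : Fin n → ℝ) (ht : ∀ i, 0 < t i)
    (c : Fin n → Fin d → ℝ) (S : Matrix (Fin d) (Fin d) ℝ) (hS : S.PosDef)
    (n0 A B : ℝ) (hn0 : n0 = ∑ i, t i) (hA : A = ∑ i, t i * u i) (hB : B = ∑ i, t i * w i)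
    (hdet : A * B - n0 ^ 2 ≠ 0)
    (f : (Fin d → ℝ) × (Fin d → ℝ) → ℝ)
    (hf : f = fun p => -(1/2) * ∑ i, t i *
      (u i * ((c i - p.1) ⬝ᵥ (S⁻¹ *ᵥ (c i - p.1))) +
        w i * (p.2 ⬝ᵥ (S⁻¹ *ᵥ p.2)) -
        ((c i - p.1) ⬝ᵥ (S⁻¹ *ᵥ p.2)) -
        (p.2 ⬝ᵥ (S⁻¹ *ᵥ (c i - p.1)))))
    (μs αs : Fin d → ℝ)
    (hμ : μs = ((B/n0) * A - n0)⁻¹ • ∑ i, (t i * (u i * (B/n0) - 1)) • c i)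
    (hα : αs = ((B/n0) * A - n0)⁻¹ • ∑ i, (t i * (A/n0 - u i)) • c i) :
    HasFDerivAt f (0 : ((Fin d → ℝ) × (Fin d → ℝ)) →L[ℝ] ℝ) (μs, αs) ∧
      ∀ p : (Fin d → ℝ) × (Fin d → ℝ),
        HasFDerivAt f (0 : ((Fin d → ℝ) × (Fin d → ℝ)) →L[ℝ] ℝ) p → p = (μs, αs) := by
  set β := (toLinearMap₂' ℝ S⁻¹ : (Fin d → ℝ) →ₗ[ℝ] (Fin d → ℝ) →ₗ[ℝ] ℝ).toContinuousBilinearMap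
  have hβ_comm : ∀ x y, β x y = β y x := (isHermitian_iff_isSymm.1 hS.inv.1).toLinearMap₂'_comm
  have hβ_sep : ∀ x, (∀ y, β x y = 0) → x = 0 :=
    (nondegenerate_of_det_ne_zero hS.inv.det_pos.ne').1.toLinearMap₂'
  have hn0_ne : n0 ≠ 0 := by
    rintro rfl
    have ht0 := (Finset.sum_eq_zero_iff_of_nonneg fun i _ => (ht i).le).1 hn0.symm
    simp [hA, ht0] at hdet
  have hsys : A • μs + n0 • αs = ∑ i, (t i * u i) • c i ∧ n0 • μs + B • αs = ∑ i, t i • c i := by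
    refine smul_add_smul_eq_of_eq_cramer hn0_ne hdet (hμ.trans (congrArg _ ?_))
      (hα.trans (congrArg _ ?_)) <;>
    · simp only [Finset.smul_sum, ← Finset.sum_sub_distrib, smul_smul]
      exact Finset.sum_congr rfl fun i _ => by module
  have hf_eq (p) : f p = -(∑ i, t i * u i * β (c i) (c i)) / 2 +
      blockForm A n0 B β (μs, αs) p - blockForm A n0 B β p p / 2 := by
    have hf_obj : f p = locationSkewnessObjective β t u w c p := by
      simp only [hf, locationSkewnessObjective, β, LinearMap.toContinuousBilinearMap_apply,
        toLinearMap₂'_apply']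
    rw [hf_obj, locationSkewnessObjective_eq hβ_comm, ← hA, ← hn0, ← hB]
    simp only [blockForm_apply A n0 B β (μs, αs), hsys.1, hsys.2]
  have hstat := hasFDerivAt_zero_iff_of_quadratic (blockForm_comm hβ_comm)
    (blockForm_separating hβ_sep hdet) hf_eq
  exact ⟨(hstat _).2 rfl, fun p => (hstat p).1⟩

/-- Closed-form joint maximizer (unique stationary point) for location and skewness in
the M-step of the EM algorithm. -/
theorem location_skewness_stationary_point {d n : ℕ}
    (t u w : Fin n → ℝ) (ht : ∀ i, 0 < t i) (hu : ∀ i, 0 < u i) (hw : ∀ i, 0 < w i)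
    (c : Fin n → Fin d → ℝ) (S : Matrix (Fin d) (Fin d) ℝ) (hS : S.PosDef)
    (n0 A B : ℝ) (hn0 : n0 = ∑ i, t i) (hA : A = ∑ i, t i * u i) (hB : B = ∑ i, t i * w i)
    (hdet : A * B - n0 ^ 2 ≠ 0)
    (f : (Fin d → ℝ) × (Fin d → ℝ) → ℝ)
    (hf : f = fun p => -(1/2) * ∑ i, t i *
      (u i * ((c i - p.1) ⬝ᵥ (S⁻¹ *ᵥ (c i - p.1))) +
        w i * (p.2 ⬝ᵥ (S⁻¹ *ᵥ p.2)) -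
        ((c i - p.1) ⬝ᵥ (S⁻¹ *ᵥ p.2)) -
        (p.2 ⬝ᵥ (S⁻¹ *ᵥ (c i - p.1)))))
    (μs αs : Fin d → ℝ)
    (hμ : μs = ((B/n0) * A - n0)⁻¹ • ∑ i, (t i * (u i * (B/n0) - 1)) • c i)
    (hα : αs = ((B/n0) * A - n0)⁻¹ • ∑ i, (t i * (A/n0 - u i)) • c i) :
    HasFDerivAt f (0 : ((Fin d → ℝ) × (Fin d → ℝ)) →L[ℝ] ℝ) (μs, αs) ∧
      ∀ p : (Fin d → ℝ) × (Fin d → ℝ),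
        HasFDerivAt f (0 : ((Fin d → ℝ) × (Fin d → ℝ)) →L[ℝ] ℝ) p → p = (μs, αs) :=
  location_skewness_stationary_point_general t u w ht c S hS n0 A B hn0 hA hB hdet f hf μs αs hμ hα
end
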